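/- arXiv:2212.14748 — 7 statements merged into one kernel-verified Lean document; each statement's English description precedes it below -/
import Mathlib

section
/- For every real r with 0 < r < 1 there is a constant C(r) such that for all N ≥ 2, |N Σ_{j=1}^{N-1} r^j/(N-j) - r/(1-r)| ≤ C(r)/N. -/
open Real Finset

/-!
Since `N / (N - j) = 1 + j / (N - j)`, the scaled sum is a geometric sum, which falls short of
`r / (1 - r)` by `r ^ N / (1 - r)`, plus `∑ j r ^ j / (N - j)`. Both are `O(1 / N)`: from
`N j / (N - j) ≤ j (j + 1)` for `j < N` and `N ≤ N (N + 1)`, `N` times either is bounded by the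
convergent series `∑ j (j + 1) r ^ j`.
-/

theorem mul_div_sub_eq_add_mul_div_sub {K : Type*} [Field K] {a b : K} (h : a - b ≠ 0) (x : K) :
    a * (x / (a - b)) = x + b * x / (a - b) := by
  field_simp
  ring

theorem geom_sum_Icc_one_sub_one {K : Type*} [Field K] {x : K} (hx : x ≠ 1) {n : ℕ}
    (hn : n ≠ 0) :
    ∑ i ∈ Icc 1 (n - 1), x ^ i = (x - x ^ n) / (1 - x) := by
  rw [Icc_sub_one_right_eq_Ico_of_not_isMin (by simpa using hn), geom_sum_Ico' hx (by omega),
    pow_one]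

theorem natCast_mul_div_sub_le {K : Type*} [Field K] [LinearOrder K] [IsStrictOrderedRing K]
    {j n : ℕ} (hjn : j < n) : (n : K) * (j / (n - j)) ≤ j * (j + 1) := by
  have hjn' : (j : K) + 1 ≤ n := by exact_mod_cast hjn
  rw [mul_div_assoc', div_le_iff₀ (by linarith)]
  nlinarith [mul_nonneg (sq_nonneg (j : K)) (sub_nonneg.2 hjn')]

theorem summable_natCast_mul_succ_mul_geometric {R : Type*} [NormedRing R] [CompleteSpace R]
    {r : R} (hr : ‖r‖ < 1) : Summable fun n : ℕ ↦ ((n : R) * (n + 1)) * r ^ n := by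
  simpa [mul_add, add_mul, sq] using
    (summable_pow_mul_geometric_of_norm_lt_one 2 hr).add
      (summable_pow_mul_geometric_of_norm_lt_one 1 hr)

theorem natCast_mul_sum_pow_div_sub_sub_eq {K : Type*} [Field K] [CharZero K] {r : K} (hr : r ≠ 1)
    {N : ℕ} (hN : N ≠ 0) :
    N * (∑ j ∈ Icc 1 (N - 1), r ^ j / ((N : K) - j)) - r / (1 - r)
      = ∑ j ∈ Icc 1 (N - 1), j * r ^ j / ((N : K) - j) - r ^ N / (1 - r) := by
  have hsub : ∀ j ∈ Icc 1 (N - 1), (N : K) - j ≠ 0 := fun j hj ↦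
    sub_ne_zero.2 (Nat.cast_injective.ne (by grind))
  rw [mul_sum, sum_congr rfl fun j hj ↦ mul_div_sub_eq_add_mul_div_sub (hsub j hj) _,
    sum_add_distrib, geom_sum_Icc_one_sub_one hr hN, sub_div]
  ring

section

variable {r : ℝ}

theorem natCast_mul_sum_mul_pow_div_sub_le (hr0 : 0 ≤ r) (hr1 : r < 1) (N : ℕ) :
    N * ∑ j ∈ Icc 1 (N - 1), j * r ^ j / ((N : ℝ) - j)
      ≤ ∑' j : ℕ, ((j : ℝ) * (j + 1)) * r ^ j := by
  rw [mul_sum]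
  calc ∑ j ∈ Icc 1 (N - 1), N * (j * r ^ j / ((N : ℝ) - j))
      ≤ ∑ j ∈ Icc 1 (N - 1), ((j : ℝ) * (j + 1)) * r ^ j := by
        refine sum_le_sum fun j hj ↦ ?_
        rw [mul_div_right_comm, ← mul_assoc]
        exact mul_le_mul_of_nonneg_right (natCast_mul_div_sub_le (by grind)) (pow_nonneg hr0 j)
    _ ≤ _ := (summable_natCast_mul_succ_mul_geometric (by rwa [norm_of_nonneg hr0])).sum_le_tsum _
        fun j _ ↦ by positivity

theorem natCast_mul_pow_le_tsum (hr0 : 0 ≤ r) (hr1 : r < 1) (N : ℕ) :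
    N * r ^ N ≤ ∑' j : ℕ, ((j : ℝ) * (j + 1)) * r ^ j := by
  have hN : (N : ℝ) ≤ N * (N + 1) := le_mul_of_one_le_right N.cast_nonneg (by simp)
  calc (N : ℝ) * r ^ N ≤ ((N : ℝ) * (N + 1)) * r ^ N := by gcongr
    _ ≤ _ := (summable_natCast_mul_succ_mul_geometric (by rwa [norm_of_nonneg hr0])).le_tsum N
        fun j _ ↦ by positivity

end

theorem sum_pow_div_sub_lt_one (r : ℝ) (hr0 : 0 < r) (hr1 : r < 1) :
    ∃ C : ℝ, ∀ N : ℕ, 2 ≤ N →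
      |(N : ℝ) * (∑ j ∈ Finset.Icc 1 (N - 1), r ^ j / ((N : ℝ) - j)) - r / (1 - r)|
        ≤ C / N := by
  set S := ∑' j : ℕ, ((j : ℝ) * (j + 1)) * r ^ j
  refine ⟨S + S / (1 - r), fun N hN ↦ ?_⟩
  have hN0 : (0 : ℝ) < N := by positivity
  rw [natCast_mul_sum_pow_div_sub_sub_eq hr1.ne (by omega), le_div_iff₀ hN0]
  set E := ∑ j ∈ Icc 1 (N - 1), j * r ^ j / ((N : ℝ) - j)
  have hE : 0 ≤ E := sum_nonneg fun j hj ↦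
    div_nonneg (by positivity) (sub_nonneg.2 (by exact_mod_cast (by grind : j ≤ N)))
  have h1r : 0 < 1 - r := sub_pos.2 hr1
  calc |E - r ^ N / (1 - r)| * N ≤ (E + r ^ N / (1 - r)) * N := by
        have ht : 0 ≤ r ^ N / (1 - r) := by positivity
        gcongr
        exact abs_sub_le_iff.2 ⟨by linarith, by linarith⟩
    _ = N * E + N * r ^ N / (1 - r) := by ring
    _ ≤ S + S / (1 - r) := by
        gcongr
        · exact natCast_mul_sum_mul_pow_div_sub_le hr0.le hr1 N
        · exact natCast_mul_pow_le_tsum hr0.le hr1 N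
end

section
/- For every real r > 1 there is a constant C(r) such that for all natural numbers N and i with 1 ≤ i ≤ N-1, |(N-i)(1 - r^{-1}) r^{-i} Σ_{k=1}^{i-1} r^k/(N-k) - (r^{-1} - r^{-i})| ≤ C(r)/(N-i). -/
/-!
With `x = r⁻¹`, `M = N - i` and the reflection `j = i - k`, the normalised sum becomes
`M (1 - x) ∑_{1 ≤ j < i} x^j / (M + j)`. Since `M / (M + j) = 1 - j / (M + j)`, its main part is
the geometric sum `(1 - x) ∑_{1 ≤ j < i} x^j = x - x^i`, and the error
`(1 - x) ∑ x^j j / (M + j)` is at most `(1 - x) / M · ∑ j x^j ≤ x / ((1 - x) M) = 1 / ((r - 1) M)`.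
-/

open Finset

lemma sum_coe_mul_pow_le {x : ℝ} (hx0 : 0 ≤ x) (hx1 : x < 1) (s : Finset ℕ) :
    ∑ j ∈ s, (j : ℝ) * x ^ j ≤ x / (1 - x) ^ 2 := by
  have hx : ‖x‖ < 1 := by rwa [Real.norm_of_nonneg hx0]
  rw [← tsum_coe_mul_geometric_of_norm_lt_one hx]
  exact (hasSum_coe_mul_geometric_of_norm_lt_one hx).summable.sum_le_tsum s
    fun j _ => by positivity

lemma sum_mul_pow_mul_div_add_le {x M : ℝ} (hx0 : 0 ≤ x) (hx1 : x < 1) (hM : 0 < M)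
    (s : Finset ℕ) :
    ∑ j ∈ s, (1 - x) * x ^ j * (j / (M + j)) ≤ x / (1 - x) / M := by
  have hx : 0 < 1 - x := by linarith
  calc ∑ j ∈ s, (1 - x) * x ^ j * (j / (M + j))
      ≤ ∑ j ∈ s, (1 - x) * x ^ j * (j / M) := by
        gcongr with j
        exact le_add_of_nonneg_right j.cast_nonneg
    _ = (1 - x) / M * ∑ j ∈ s, (j : ℝ) * x ^ j := by
        rw [mul_sum]; exact sum_congr rfl fun j _ => by ring
    _ ≤ (1 - x) / M * (x / (1 - x) ^ 2) := by gcongr; exact sum_coe_mul_pow_le hx0 hx1 s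
    _ = x / (1 - x) / M := by field_simp

lemma zpow_neg_mul_sum_Icc_div_eq {r : ℝ} (hr : r ≠ 0) (N i : ℕ) :
    r ^ (-(i : ℤ)) * ∑ k ∈ Icc 1 (i - 1), r ^ k / ((N : ℝ) - k) =
      ∑ j ∈ Ico 1 i, r⁻¹ ^ j / ((N : ℝ) - i + j) := by
  have hIcc : Icc 1 (i - 1) = Ico 1 i := by ext; simp only [mem_Icc, mem_Ico]; omega
  have hreflect := sum_Ico_reflect (fun j => r⁻¹ ^ j / ((N : ℝ) - i + j)) 1 (Nat.le_succ i)
  rw [Nat.add_sub_cancel_left, Nat.add_sub_cancel] at hreflect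
  rw [hIcc, mul_sum, ← hreflect]
  refine sum_congr rfl fun j hj => ?_
  have hji : j ≤ i := (mem_Ico.1 hj).2.le
  rw [Nat.cast_sub hji, inv_pow, pow_sub₀ r hr hji, zpow_neg, zpow_natCast,
    mul_inv, inv_inv, sub_add_sub_cancel]
  ring

lemma mul_sum_pow_div_add_sub_eq {x M : ℝ} (hM : 0 < M) {i : ℕ} (hi : 1 ≤ i) :
    M * (1 - x) * ∑ j ∈ Ico 1 i, x ^ j / (M + j) - (x - x ^ i) =
      -∑ j ∈ Ico 1 i, (1 - x) * x ^ j * (j / (M + j)) := by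
  have hgeom := geom_sum_Ico_mul_neg x hi
  rw [pow_one] at hgeom
  rw [← hgeom, mul_sum, sum_mul, ← sum_sub_distrib, ← sum_neg_distrib]
  refine sum_congr rfl fun j _ => ?_
  have : M + j ≠ 0 := by positivity
  field_simp
  ring

theorem sum_up_to_i (r : ℝ) (hr : 1 < r) :
    ∃ C : ℝ, ∀ N i : ℕ, 1 ≤ i → i < N →
      |((N : ℝ) - i) * (1 - r⁻¹) * r ^ (-(i : ℤ)) *
          (∑ k ∈ Finset.Icc 1 (i - 1), r ^ k / ((N : ℝ) - k))
        - (r⁻¹ - r ^ (-(i : ℤ)))|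
        ≤ C / ((N : ℝ) - i) := by
  have hr0 : 0 < r := zero_lt_one.trans hr
  have hx1 : r⁻¹ < 1 := inv_lt_one_of_one_lt₀ hr
  have h1x : 0 < 1 - r⁻¹ := sub_pos.2 hx1
  refine ⟨r⁻¹ / (1 - r⁻¹), fun N i hi hiN => ?_⟩
  have hM : 0 < (N : ℝ) - i := sub_pos.2 (Nat.cast_lt.2 hiN)
  rw [mul_assoc _ (r ^ _), zpow_neg_mul_sum_Icc_div_eq hr0.ne' N i, zpow_neg,
    zpow_natCast, ← inv_pow, mul_sum_pow_div_add_sub_eq hM hi, abs_neg,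
    abs_of_nonneg (sum_nonneg fun j _ => by positivity)]
  exact sum_mul_pow_mul_div_add_le (inv_nonneg.2 hr0.le) hx1 hM _
end

section
/- For every real r > 1 there is a constant C(r) such that for all naturals i < N, |(N-i) r^i (1 - r^{-1}) Σ_{k=i}^{N-1} r^{-k}/(N-k) - 1| ≤ C(r)/(N-i). -/
/-!
Put `q = r⁻¹` and `m = N - i`. Shifting the summation index by `i`, the quantity becomes
`m (1 - q) ∑_{j<m} q^j / (m - j) - 1`. Since `m / (m - j) = 1 + j / (m - j)` and
`(1 - q) ∑_{j<m} q^j = 1 - q^m`, this equals `(1 - q) T - q^m` with `T = ∑_{j<m} j q^j / (m - j)`.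
Both terms are `O(1/m)`: `m T ≤ ∑_j j (j + 1) q^j` because `m ≤ (j + 1)(m - j)` for `j < m`, and
`m q^m ≤ ∑_{j<m} q^j ≤ 1 / (1 - q)`.
-/

open Real Finset

theorem sum_Icc_zpow_neg_div_eq_sum_range {r : ℝ} (hr : r ≠ 0) {N i : ℕ} (hiN : i < N) :
    r ^ i * ∑ k ∈ Icc i (N - 1), r ^ (-(k : ℤ)) / ((N : ℝ) - k)
      = ∑ j ∈ range (N - i), r⁻¹ ^ j / (((N - i : ℕ) : ℝ) - j) := by
  rw [← Ico_add_one_right_eq_Icc, Nat.sub_add_cancel (by omega), sum_Ico_eq_sum_range, mul_sum]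
  refine sum_congr rfl fun j _ => ?_
  have hpow : r ^ i * r ^ (-((i + j : ℕ) : ℤ)) = r⁻¹ ^ j := by
    rw [← zpow_natCast r i, ← zpow_add₀ hr, inv_pow, ← zpow_natCast, ← zpow_neg]
    push_cast
    ring_nf
  rw [Nat.cast_sub hiN.le, ← hpow]
  push_cast
  ring_nf

theorem mul_sum_pow_div_sub_eq (q : ℝ) (m : ℕ) :
    (m : ℝ) * ∑ j ∈ range m, q ^ j / ((m : ℝ) - j)
      = ∑ j ∈ range m, q ^ j + ∑ j ∈ range m, j * q ^ j / ((m : ℝ) - j) := by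
  rw [mul_sum, ← sum_add_distrib]
  refine sum_congr rfl fun j hj => ?_
  have : (m : ℝ) - j ≠ 0 := sub_ne_zero.mpr (by exact_mod_cast (mem_range.mp hj).ne')
  field_simp
  ring

theorem mul_sum_mul_pow_div_sub_le {q : ℝ} (hq : 0 ≤ q) (m : ℕ) :
    (m : ℝ) * ∑ j ∈ range m, j * q ^ j / ((m : ℝ) - j)
      ≤ ∑ j ∈ range m, (j : ℝ) * (j + 1) * q ^ j := by
  rw [mul_sum]
  refine sum_le_sum fun j hj => ?_
  have hjm : (j : ℝ) + 1 ≤ m := by exact_mod_cast mem_range.mp hj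
  have hpos : (0 : ℝ) < m - j := by linarith
  rw [mul_div_assoc', div_le_iff₀ hpos]
  have : 0 ≤ (j : ℝ) * q ^ j := by positivity
  nlinarith [mul_nonneg this (by linarith : (0 : ℝ) ≤ m - j - 1)]

theorem mul_pow_le_inv_one_sub {q : ℝ} (hq0 : 0 ≤ q) (hq1 : q < 1) (m : ℕ) :
    (m : ℝ) * q ^ m ≤ (1 - q)⁻¹ :=
  calc (m : ℝ) * q ^ m = ∑ _j ∈ range m, q ^ m := by simp
    _ ≤ ∑ j ∈ range m, q ^ j :=
        sum_le_sum fun j hj => pow_le_pow_of_le_one hq0 hq1.le (mem_range.mp hj).le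
    _ ≤ (1 - q)⁻¹ := by
        have := geom_sum_Ico_le_of_lt_one (m := 0) (n := m) hq0 hq1
        rwa [← range_eq_Ico, pow_zero, one_div] at this

theorem abs_mul_one_sub_mul_sum_pow_div_sub_sub_one_le {q : ℝ} (hq0 : 0 ≤ q) (hq1 : q < 1)
    {m : ℕ} (hm : 0 < m) :
    |(m : ℝ) * (1 - q) * ∑ j ∈ range m, q ^ j / ((m : ℝ) - j) - 1|
      ≤ (∑' j : ℕ, (j : ℝ) * (j + 1) * q ^ j + (1 - q)⁻¹) / m := by
  set T := ∑ j ∈ range m, j * q ^ j / ((m : ℝ) - j)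
  have hm' : (0 : ℝ) < m := by exact_mod_cast hm
  have hT : 0 ≤ T := sum_nonneg fun j hj => div_nonneg (by positivity)
    (sub_nonneg.mpr (by exact_mod_cast (mem_range.mp hj).le))
  have hsummable : Summable fun j : ℕ => (j : ℝ) * (j + 1) * q ^ j := by
    have hq : ‖q‖ < 1 := by rwa [norm_of_nonneg hq0]
    refine ((summable_pow_mul_geometric_of_norm_lt_one 2 hq).add
      (summable_pow_mul_geometric_of_norm_lt_one 1 hq)).congr fun j => ?_
    ring
  have hmT : m * T ≤ ∑' j : ℕ, (j : ℝ) * (j + 1) * q ^ j :=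
    (mul_sum_mul_pow_div_sub_le hq0 m).trans
      (hsummable.sum_le_tsum _ fun j _ => by positivity)
  have herror : (m : ℝ) * (1 - q) * ∑ j ∈ range m, q ^ j / ((m : ℝ) - j) - 1
      = (1 - q) * T - q ^ m := by
    linear_combination (1 - q) * mul_sum_pow_div_sub_eq q m - geom_sum_mul q m
  rw [herror, le_div_iff₀ hm']
  calc |(1 - q) * T - q ^ m| * m ≤ (T + q ^ m) * m := by
        gcongr
        refine (abs_sub _ _).trans ?_
        rw [abs_of_nonneg (by positivity), abs_of_nonneg (by positivity)]
        nlinarith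
    _ ≤ _ := by nlinarith [mul_pow_le_inv_one_sub hq0 hq1 m]

theorem sum_i_up_to_N_first (r : ℝ) (hr : 1 < r) :
    ∃ C : ℝ, ∀ N i : ℕ, 1 ≤ i → i < N →
      |((N : ℝ) - i) * r ^ i * (1 - r⁻¹) *
          (∑ k ∈ Finset.Icc i (N - 1), r ^ (-(k : ℤ)) / ((N : ℝ) - k)) - 1|
        ≤ C / ((N : ℝ) - i) := by
  refine ⟨∑' j : ℕ, (j : ℝ) * (j + 1) * r⁻¹ ^ j + (1 - r⁻¹)⁻¹, fun N i _ hiN => ?_⟩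
  have hcast : (N : ℝ) - i = ((N - i : ℕ) : ℝ) := (Nat.cast_sub hiN.le).symm
  have hreindex := sum_Icc_zpow_neg_div_eq_sum_range (by positivity : r ≠ 0) hiN
  rw [hcast, mul_right_comm _ (r ^ i), mul_assoc _ (r ^ i), hreindex]
  exact abs_mul_one_sub_mul_sum_pow_div_sub_sub_one_le (by positivity) (inv_lt_one_of_one_lt₀ hr)
    (by omega)
end

section
/- For the neutral Moran process on a population of size N, the mean absorption time starting from one mutant is t_1 = N·H_{N-1}, where H_{N-1} is the (N-1)-st harmonic number, derived from t_1 = π_1 Σ_{j=1}^{N-1} Σ_{i=1}^j 1/α_i with π_1 = 1/N and α_i = i(N-i)/N². -/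
open Real Finset

noncomputable def H (n : ℕ) : ℝ := ∑ i ∈ Finset.Icc 1 n, (1 : ℝ) / i

theorem Finset.sum_Icc_sum_Icc_eq_sum_nsmul {M : Type*} [AddCommMonoid M] (f : ℕ → M) (n : ℕ) :
    ∑ j ∈ Icc 1 n, ∑ i ∈ Icc 1 j, f i = ∑ i ∈ Icc 1 n, (n + 1 - i) • f i := by
  rw [sum_comm' (t' := Icc 1 n) (s' := fun i => Icc i n) (h := by intros; simp only [mem_Icc]; omega)]
  simp only [sum_const, Nat.card_Icc]

/-- Weighting `1 / α_i` by `N - i` cancels the factor `N - i` of `α_i = i (N - i) / N²`. -/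
theorem sub_mul_inv_neutral_rate {K : Type*} [Field K] {n x : K} (h : n - x ≠ 0) :
    (n - x) * (1 / (x * (n - x) / n ^ 2)) = n ^ 2 / x := by
  field_simp

theorem neutral_t1 (N : ℕ) (hN : 1 ≤ N) :
    (1 / (N : ℝ)) * ∑ j ∈ Finset.Icc 1 (N - 1), ∑ i ∈ Finset.Icc 1 j,
        1 / (((i : ℝ) * ((N : ℝ) - i)) / (N : ℝ) ^ 2)
      = N * H (N - 1) := by
  have hN0 : (N : ℝ) ≠ 0 := by positivity
  have weighted : ∀ i ∈ Icc 1 (N - 1),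
      (N - 1 + 1 - i) • (1 / (((i : ℝ) * ((N : ℝ) - i)) / (N : ℝ) ^ 2)) = (N : ℝ) ^ 2 * (1 / i) := by
    intro i hi
    have hiN : i < N := by grind
    rw [Nat.sub_add_cancel hN, nsmul_eq_mul, Nat.cast_sub hiN.le, sub_mul_inv_neutral_rate, div_eq_mul_one_div]
    exact sub_ne_zero.mpr (by exact_mod_cast hiN.ne')
  rw [sum_Icc_sum_Icc_eq_sum_nsmul, sum_congr rfl weighted, ← mul_sum, H]
  field_simp
end

section
/- For the neutral Moran process on a population of size N and 1 ≤ i ≤ N-1, the mean absorption time from state i equals t_i = N[(N-i)(H_{N-1} - H_{N-i-1}) + i(H_{N-1} - H_i)]. -/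
/-! Partial fractions give `N² / (k (N - k)) = N (1/k + 1/(N - k))`, so the inner sum is
`N (H j + H (N-1) - H (N-1-j))`. Its `H (N-1)` part summed over `j` cancels `t₁ (N - i)`,
leaving `N ∑_{j=i}^{N-1} (H j - H (N-1-j))`, which the identity `∑_{j<n} H j = n H n - n`
evaluates in closed form. -/

open Real Finset

lemma H_succ (n : ℕ) : H (n + 1) = H n + 1 / (n + 1) := by
  rw [H, sum_Icc_succ_top (by omega), ← H]
  push_cast
  rfl

lemma natCast_mul_H_of_pos {n : ℕ} (hn : 0 < n) : n * H n = n * H (n - 1) + 1 := by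
  obtain ⟨m, rfl⟩ : ∃ m, n = m + 1 := ⟨n - 1, by omega⟩
  rw [H_succ, Nat.add_sub_cancel]
  push_cast
  field_simp

lemma sum_range_H (n : ℕ) : ∑ j ∈ range n, H j = n * H n - n := by
  induction n with
  | zero => simp
  | succ n ih =>
    rw [sum_range_succ, ih, H_succ]
    push_cast
    field_simp
    ring

lemma sum_Ico_H {m n : ℕ} (h : m ≤ n) :
    ∑ j ∈ Ico m n, H j = (n * H n - n) - (m * H m - m) := by
  rw [sum_Ico_eq_sub _ h, sum_range_H, sum_range_H]

lemma sum_Icc_one_div_natCast_sub {N j : ℕ} (hj : j < N) :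
    ∑ k ∈ Icc 1 j, 1 / ((N : ℝ) - k) = H (N - 1) - H (N - 1 - j) := by
  induction j with
  | zero => simp
  | succ j ih =>
    obtain ⟨m, hm⟩ : ∃ m, N - 1 - j = m + 1 := ⟨N - 1 - j - 1, by omega⟩
    have hcast : (N : ℝ) - (j + 1 : ℕ) = m + 1 := by
      rw [show N = m + j + 2 by omega]
      push_cast
      ring
    rw [sum_Icc_succ_top (by omega), ih (by omega), hm, H_succ, show N - 1 - (j + 1) = m by omega,
      hcast]
    ring

lemma one_div_mul_sub_div_sq {K : Type*} [Field K] {a x : K} (hx : x ≠ 0) (hax : a - x ≠ 0) :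
    1 / (x * (a - x) / a ^ 2) = a * (1 / x + 1 / (a - x)) := by
  field_simp
  ring

lemma sum_Icc_one_div_neutral_rate {N j : ℕ} (hj : j < N) :
    ∑ k ∈ Icc 1 j, 1 / ((k : ℝ) * ((N : ℝ) - k) / (N : ℝ) ^ 2)
      = N * (H j + (H (N - 1) - H (N - 1 - j))) := calc
  _ = ∑ k ∈ Icc 1 j, (N : ℝ) * (1 / (k : ℝ) + 1 / ((N : ℝ) - k)) := by
    refine sum_congr rfl fun k hk => one_div_mul_sub_div_sq ?_ ?_
    · have : 1 ≤ k := (mem_Icc.mp hk).1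
      positivity
    · have : (k : ℝ) < N := by exact_mod_cast (mem_Icc.mp hk).2.trans_lt hj
      linarith
  _ = N * (H j + (H (N - 1) - H (N - 1 - j))) := by
    rw [← mul_sum, sum_add_distrib, sum_Icc_one_div_natCast_sub hj]
    rfl

theorem neutral_ti (N i : ℕ) (hi1 : 1 ≤ i) (hiN : i ≤ N - 1) :
    (∑ j ∈ Finset.Icc i (N - 1), ∑ k ∈ Finset.Icc 1 j,
        1 / (((k : ℝ) * ((N : ℝ) - k)) / (N : ℝ) ^ 2))
      - (N * H (N - 1)) * ((N : ℝ) - i)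
      = N * (((N : ℝ) - i) * (H (N - 1) - H (N - i - 1)) + i * (H (N - 1) - H i)) := by
  have hN : 0 < N := by omega
  have hiN' : i ≤ N := by omega
  have hIcc : Icc i (N - 1) = Ico i N := by
    ext j
    simp only [mem_Icc, mem_Ico]
    omega
  have hreflect : ∑ j ∈ Ico i N, H (N - 1 - j) = ∑ j ∈ range (N - i), H j := by
    rw [sum_Ico_reflect _ _ (by omega : N ≤ N - 1 + 1), Nat.sub_add_cancel hN, Nat.sub_self,
      Nat.Ico_zero_eq_range]
  rw [hIcc, sum_congr rfl fun j hj => sum_Icc_one_div_neutral_rate (mem_Ico.mp hj).2,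
    ← mul_sum, sum_add_distrib, sum_sub_distrib, sum_const, Nat.card_Ico, hreflect, sum_Ico_H hiN',
    sum_range_H, nsmul_eq_mul]
  have hNi := natCast_mul_H_of_pos (Nat.sub_pos_of_lt (by omega : i < N))
  push_cast [Nat.cast_sub hiN'] at hNi ⊢
  linear_combination (N : ℝ) * natCast_mul_H_of_pos hN - N * hNi
end

section
/- Fix a rational x ∈ (0,1). For the neutral Moran process with population size N (ranging over multiples of the denominator of x so that Nx is an integer), the mean conditional fixation time satisfies t_{Nx}^N = −((1-x)log(1-x)/x) N² − N/2 + O(1) as N → ∞. -/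
open Real Finset

/-! The midpoint rule `1 / k ≈ log (k + 1/2) - log (k - 1/2)`, with error `O(k⁻³)`, gives
`H (N - 1) - H m = log ((N - 1/2) / (m + 1/2)) + O(N / m³)`, and for `m = N (1 - x)` this is
`-log (1 - x) - 1 / (2N) - 1 / (2m) + O(N⁻²)`. The prefactor `N (N - i) / i` is `O(N²)`, so the
error stays bounded, while the two `1 / (2·)` corrections combine with the `+ 1` into `-N / 2`. -/

lemma abs_sum_range_add_log_one_sub_le {u : ℝ} (hu : |u| ≤ 1 / 2) (n : ℕ) :
    |(∑ i ∈ range n, u ^ (i + 1) / (i + 1)) + log (1 - u)| ≤ 2 * |u| ^ (n + 1) := by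
  refine (abs_log_sub_add_sum_range_le (by linarith) n).trans ?_
  rw [div_le_iff₀ (by linarith)]
  nlinarith [pow_nonneg (abs_nonneg u) (n + 1)]

lemma abs_log_one_add_sub_le {u : ℝ} (hu : |u| ≤ 1 / 2) : |log (1 + u) - u| ≤ 2 * u ^ 2 := by
  have h := abs_sum_range_add_log_one_sub_le (u := -u) (by rwa [abs_neg]) 1
  simp only [range_one, sum_singleton, zero_add, pow_one, Nat.cast_zero, div_one, sub_neg_eq_add,
    abs_neg] at h
  simpa only [neg_add_eq_sub, one_add_one_eq_two, sq_abs] using h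

lemma abs_log_one_add_sub_log_one_sub_le {u : ℝ} (hu : |u| ≤ 1 / 2) :
    |log (1 + u) - log (1 - u) - 2 * u| ≤ 4 * |u| ^ 3 := by
  have hpos := abs_sum_range_add_log_one_sub_le hu 2
  have hneg := abs_sum_range_add_log_one_sub_le (u := -u) (by rwa [abs_neg]) 2
  simp only [sum_range_succ, range_one, sum_singleton, sub_neg_eq_add, abs_neg] at hpos hneg
  norm_num at hpos hneg
  rw [abs_le] at hpos hneg ⊢
  constructor <;> linarith [hpos.1, hpos.2, hneg.1, hneg.2]

lemma abs_log_add_sub_log_sub_le {a t : ℝ} (ha : 0 < a) (ht : |t| ≤ a / 2) :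
    |log (a + t) - log a - t / a| ≤ 2 * (t / a) ^ 2 := by
  have hta : |t / a| ≤ 1 / 2 := by
    rw [abs_div, abs_of_pos ha, div_le_iff₀ ha]; linarith
  have h1 : 0 < 1 + t / a := by linarith [neg_abs_le (t / a)]
  have hsplit : a + t = a * (1 + t / a) := by field_simp
  rw [hsplit, log_mul ha.ne' h1.ne', add_sub_cancel_left]
  exact abs_log_one_add_sub_le hta

lemma abs_one_div_sub_log_sub_log_le {k : ℝ} (hk : 1 ≤ k) :
    |1 / k - (log (k + 1 / 2) - log (k - 1 / 2))| ≤ 1 / (2 * k ^ 3) := by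
  have hk0 : 0 < k := by linarith
  obtain ⟨u, hu_def⟩ : ∃ u : ℝ, u = 1 / (2 * k) := ⟨_, rfl⟩
  have hu0 : 0 < u := by rw [hu_def]; positivity
  have hu : |u| ≤ 1 / 2 := by
    rw [abs_of_pos hu0, hu_def, div_le_div_iff₀ (by positivity) (by norm_num)]; linarith
  have hplus : k + 1 / 2 = k * (1 + u) := by rw [hu_def]; field_simp
  have hminus : k - 1 / 2 = k * (1 - u) := by rw [hu_def]; field_simp
  have h1 : 0 < 1 - u := by linarith [le_abs_self u]
  rw [hplus, hminus, log_mul hk0.ne' (by linarith), log_mul hk0.ne' h1.ne',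
    show 1 / k = 2 * u by rw [hu_def]; field_simp, show 1 / (2 * k ^ 3) = 4 * |u| ^ 3 by
      rw [abs_of_pos hu0, hu_def]; field_simp; ring, abs_sub_comm]
  convert abs_log_one_add_sub_log_one_sub_le hu using 2
  ring

lemma abs_H_sub_H_sub_log_le {m n : ℕ} (hmn : m ≤ n) :
    |H n - H m - (log (n + 1 / 2) - log (m + 1 / 2))| ≤ (n - m) / (2 * (m + 1) ^ 3) := by
  induction n, hmn using Nat.le_induction with
  | base => simp
  | succ n hmn ih =>
    have hstep := abs_one_div_sub_log_sub_log_le (k := (n : ℝ) + 1)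
      (by linarith [n.cast_nonneg (α := ℝ)])
    have hmono : 1 / (2 * ((n : ℝ) + 1) ^ 3) ≤ 1 / (2 * ((m : ℝ) + 1) ^ 3) := by
      gcongr
    rw [H_succ]
    push_cast
    calc |H n + 1 / (n + 1) - H m - (log (n + 1 + 1 / 2) - log (m + 1 / 2))|
        = |(H n - H m - (log (n + 1 / 2) - log (m + 1 / 2)))
            + (1 / (n + 1) - (log (n + 1 + 1 / 2) - log (n + 1 - 1 / 2)))| := by ring_nf
      _ ≤ (n - m) / (2 * (m + 1) ^ 3) + 1 / (2 * ((m : ℝ) + 1) ^ 3) :=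
          (abs_add_le _ _).trans (add_le_add ih (hstep.trans hmono))
      _ = (n + 1 - m) / (2 * (m + 1) ^ 3) := by ring

lemma abs_H_sub_H_sub_log_div_le {m N : ℕ} (hm : 1 ≤ m) (hmN : m < N) :
    |H (N - 1) - H m - (log (N / m) - 1 / (2 * N) - 1 / (2 * m))|
      ≤ N / (2 * m ^ 3) + 1 / (2 * N ^ 2) + 1 / (2 * m ^ 2) := by
  have hm1 : (1 : ℝ) ≤ m := by exact_mod_cast hm
  have hmN' : (m : ℝ) < N := by exact_mod_cast hmN
  have hsum := abs_H_sub_H_sub_log_le (m := m) (n := N - 1) (by omega)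
  rw [Nat.cast_sub (by omega), Nat.cast_one] at hsum
  have hsum_le : ((N : ℝ) - 1 - m) / (2 * (m + 1) ^ 3) ≤ N / (2 * m ^ 3) := by
    gcongr <;> linarith
  have hlogN := abs_log_add_sub_log_sub_le (a := N) (t := -(1 / 2)) (by linarith)
    (by rw [abs_neg, abs_of_pos one_half_pos]; linarith)
  have hlogm := abs_log_add_sub_log_sub_le (a := m) (t := 1 / 2) (by linarith)
    (by rw [abs_of_pos one_half_pos]; linarith)
  rw [log_div (by linarith) (by linarith)]
  rw [abs_le] at hsum hlogN hlogm ⊢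
  have hN2 : 2 * (-(1 / 2) / (N : ℝ)) ^ 2 = 1 / (2 * N ^ 2) := by field_simp
  have hm2 : 2 * (1 / 2 / (m : ℝ)) ^ 2 = 1 / (2 * m ^ 2) := by field_simp
  have hN_inv : -(1 / 2) / (N : ℝ) = -(1 / (2 * N)) := by ring
  have hm_inv : 1 / 2 / (m : ℝ) = 1 / (2 * m) := by ring
  rw [hN2, hN_inv, show (N : ℝ) + -(1 / 2) = N - 1 + 1 / 2 by ring] at hlogN
  rw [hm2, hm_inv] at hlogm
  constructor <;> linarith [hsum.1, hsum.2, hlogN.1, hlogN.2, hlogm.1, hlogm.2]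

lemma abs_fixation_time_sub_le {n x S E : ℝ} (hn : 0 < n) (hx0 : 0 < x) (hx1 : x < 1)
    (hS : |S - (-log (1 - x) - 1 / (2 * n) - 1 / (2 * (n * (1 - x))))| ≤ E / n ^ 2) :
    |n * (n - n * x) / (n * x) * (n * S + 1) - (-((1 - x) * log (1 - x) / x) * n ^ 2 - n / 2)|
      ≤ (1 - x) / x * E := by
  have hy : 0 < 1 - x := by linarith
  have hfactor : 0 < n ^ 2 * (1 - x) / x := by positivity
  calc _ = |n ^ 2 * (1 - x) / x
          * (S - (-log (1 - x) - 1 / (2 * n) - 1 / (2 * (n * (1 - x)))))| := by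
        congr 1; field_simp; ring
    _ ≤ n ^ 2 * (1 - x) / x * (E / n ^ 2) := by
        rw [abs_mul, abs_of_pos hfactor]; gcongr
    _ = (1 - x) / x * E := by field_simp

theorem neutral_tiN_x_fixed (x : ℚ) (hx0 : 0 < x) (hx1 : x < 1) :
    ∃ C : ℝ, ∀ N i : ℕ, 1 ≤ N → (i : ℚ) = N * x →
      |((N : ℝ) * ((N : ℝ) - i) / i) * ((N : ℝ) * (H (N - 1) - H (N - i)) + 1)
          - (-((1 - (x : ℝ)) * Real.log (1 - (x : ℝ)) / (x : ℝ)) * (N : ℝ) ^ 2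
              - (N : ℝ) / 2)|
        ≤ C := by
  have hx0' : (0 : ℝ) < x := by exact_mod_cast hx0
  have hy : (0 : ℝ) < 1 - x := by norm_cast; linarith
  refine ⟨(1 - x) / x * (1 / (2 * (1 - x) ^ 3) + 1 / 2 + 1 / (2 * (1 - x) ^ 2)),
    fun N i hN hi => ?_⟩
  have hiR : (i : ℝ) = N * x := by exact_mod_cast hi
  have hN0 : (0 : ℝ) < N := by exact_mod_cast hN
  have hi0 : 0 < i := by
    have : (0 : ℝ) < i := by rw [hiR]; positivity
    exact_mod_cast this
  have hiN : i < N := by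
    have : (i : ℝ) < N := by rw [hiR]; nlinarith
    exact_mod_cast this
  have hm : ((N - i : ℕ) : ℝ) = N * (1 - x) := by
    rw [Nat.cast_sub hiN.le, hiR]; ring
  have hH := abs_H_sub_H_sub_log_div_le (m := N - i) (N := N) (by omega) (by omega)
  have hratio : (N : ℝ) / (N * (1 - x)) = (1 - (x : ℝ))⁻¹ := by field_simp
  have herror : (N : ℝ) / (2 * (N * (1 - x)) ^ 3) + 1 / (2 * N ^ 2) + 1 / (2 * (N * (1 - x)) ^ 2)
      = (1 / (2 * (1 - x) ^ 3) + 1 / 2 + 1 / (2 * (1 - x) ^ 2)) / N ^ 2 := by field_simp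
  rw [hm, hratio, log_inv, herror] at hH
  rw [hiR]
  exact abs_fixation_time_sub_le hN0 hx0' (by linarith) hH
end

section
/- For real r with 0 < r < 1 there is a constant C(r) such that for all N ≥ 2, t_1 = (N(1+r)/(r(1-r^{-N}))) H_{N-1} − (N r^{-N}/(1-r^{-N})) Σ_{k=1}^{N-1} (1/(N-k) + 1/(rk)) r^k satisfies |t_1 + (log(1-r)/r) N − r/(1-r)| ≤ C(r)/N. -/
/-!
Write `x = r ^ N`. Since `r ^ (-N) = x⁻¹`, the expression equals
`N x / (1 - x) * (S - (1 + r) / r * H (N - 1)) + (N S + log (1 - r) / r * N - r / (1 - r))`,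
where `S` is the sum in `t₁`. The first summand is `O(N² x)`, i.e. exponentially small.
Termwise, `N S = ∑ r ^ k + ∑ k r ^ k / (N - k) + (N / r) ∑ r ^ k / k`: the geometric sum
cancels `r / (1 - r)` and the logarithmic series cancels `log (1 - r)`, both up to `O(x)`,
and the middle sum is `O(1 / N)` because `N k / (N - k) ≤ k + k²`. Every error term is thus
bounded by a moment `∑ k ^ m r ^ k` divided by `N`.
-/

open Real Finset

noncomputable def geomMoment (r : ℝ) (m : ℕ) : ℝ := ∑' k : ℕ, (k : ℝ) ^ m * r ^ k

lemma H_nonneg (n : ℕ) : 0 ≤ H n := sum_nonneg fun _ _ => by positivity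

lemma H_le_self (n : ℕ) : H n ≤ n := by
  calc H n ≤ ∑ i ∈ Icc 1 n, (1 : ℝ) :=
        sum_le_sum fun i hi => div_le_one_of_le₀ (mod_cast (mem_Icc.1 hi).1) (by positivity)
    _ = n := by simp

lemma sum_Icc_one_eq_sum_range {M : Type*} [AddCommMonoid M] (f : ℕ → M) (n : ℕ) :
    ∑ k ∈ Icc 1 n, f k = ∑ i ∈ range n, f (i + 1) := by
  rw [range_eq_Ico, sum_Ico_add' f 0 n 1, zero_add, Ico_add_one_right_eq_Icc]

lemma t1_decomposition {N r x h s ℓ c : ℝ} (hr : r ≠ 0) (hx0 : x ≠ 0) (hx1 : x ≠ 1) :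
    N * (1 + r) / (r * (1 - x⁻¹)) * h - N * x⁻¹ / (1 - x⁻¹) * s + ℓ / r * N - c
      = N * x / (1 - x) * (s - (1 + r) / r * h) + (N * s + ℓ / r * N - c) := by
  have : 1 - x ≠ 0 := sub_ne_zero.2 (Ne.symm hx1)
  have : x - 1 ≠ 0 := sub_ne_zero.2 hx1
  field_simp
  ring

section
variable {r : ℝ} {N : ℕ}

lemma sum_le_geomMoment (hr0 : 0 ≤ r) (hr1 : r < 1) (m : ℕ) (s : Finset ℕ) :
    ∑ k ∈ s, (k : ℝ) ^ m * r ^ k ≤ geomMoment r m :=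
  (summable_pow_mul_geometric_of_norm_lt_one m (by rwa [norm_of_nonneg hr0])).sum_le_tsum s
    fun _ _ => by positivity

lemma pow_mul_pow_le_geomMoment (hr0 : 0 ≤ r) (hr1 : r < 1) (m n : ℕ) :
    (n : ℝ) ^ m * r ^ n ≤ geomMoment r m := by
  simpa using sum_le_geomMoment hr0 hr1 m {n}

lemma abs_sum_pow_div_add_log_le (hr0 : 0 ≤ r) (hr1 : r < 1) (hN : 1 ≤ N) :
    |∑ k ∈ Icc 1 (N - 1), r ^ k / k + log (1 - r)| ≤ r ^ N / (1 - r) := by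
  have h := abs_log_sub_add_sum_range_le (by rwa [abs_of_nonneg hr0]) (N - 1)
  rw [abs_of_nonneg hr0, Nat.sub_add_cancel hN] at h
  simpa [sum_Icc_one_eq_sum_range] using h

lemma one_le_cast_sub_of_mem_Icc {k : ℕ} (hk : k ∈ Icc 1 (N - 1)) : 1 ≤ (N : ℝ) - k := by
  obtain ⟨hk1, hkN⟩ := mem_Icc.1 hk
  rw [le_sub_iff_add_le']; exact_mod_cast (by omega : k + 1 ≤ N)

lemma mul_sum_add_sub_eq (hr0 : r ≠ 0) (hr1 : r ≠ 1) (hN : 1 ≤ N) (ℓ : ℝ) :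
    N * ∑ k ∈ Icc 1 (N - 1), (1 / ((N : ℝ) - k) + 1 / (r * k)) * r ^ k
        + ℓ / r * N - r / (1 - r)
      = ∑ k ∈ Icc 1 (N - 1), k * r ^ k / ((N : ℝ) - k) - r ^ N / (1 - r)
        + N / r * (∑ k ∈ Icc 1 (N - 1), r ^ k / k + ℓ) := by
  have hgeom : ∑ k ∈ Icc 1 (N - 1), r ^ k = (r - r ^ N) / (1 - r) := by
    rw [← Ico_add_one_right_eq_Icc, Nat.sub_add_cancel hN, geom_sum_Ico' hr1 hN, pow_one]
  have hterm : ∀ k ∈ Icc 1 (N - 1), N * ((1 / ((N : ℝ) - k) + 1 / (r * k)) * r ^ k)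
      = r ^ k + k * r ^ k / ((N : ℝ) - k) + N / r * (r ^ k / k) := by
    intro k hk
    have : (N : ℝ) - k ≠ 0 := by linarith [one_le_cast_sub_of_mem_Icc hk]
    have : (k : ℝ) ≠ 0 := by have := (mem_Icc.1 hk).1; positivity
    field_simp
    ring
  rw [mul_sum, sum_congr rfl hterm, sum_add_distrib, sum_add_distrib, hgeom, ← mul_sum]
  have : 1 - r ≠ 0 := sub_ne_zero.2 (Ne.symm hr1)
  field_simp
  ring

lemma sum_mul_pow_div_sub_le (hr0 : 0 ≤ r) (hr1 : r < 1) :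
    N * ∑ k ∈ Icc 1 (N - 1), k * r ^ k / ((N : ℝ) - k)
      ≤ geomMoment r 1 + geomMoment r 2 := by
  calc N * ∑ k ∈ Icc 1 (N - 1), k * r ^ k / ((N : ℝ) - k)
        ≤ ∑ k ∈ Icc 1 (N - 1), ((k : ℝ) ^ 1 * r ^ k + (k : ℝ) ^ 2 * r ^ k) := by
        rw [mul_sum]
        refine sum_le_sum fun k hk => ?_
        have hNk := one_le_cast_sub_of_mem_Icc hk
        have : (N : ℝ) * k ≤ (k + k ^ 2) * ((N : ℝ) - k) := by
          nlinarith [mul_nonneg (sq_nonneg (k : ℝ)) (sub_nonneg.2 hNk)]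
        rw [mul_div_assoc', div_le_iff₀ (by linarith)]
        nlinarith [pow_nonneg hr0 k]
    _ ≤ geomMoment r 1 + geomMoment r 2 := by
        rw [sum_add_distrib]
        exact add_le_add (sum_le_geomMoment hr0 hr1 1 _) (sum_le_geomMoment hr0 hr1 2 _)

lemma abs_sum_inv_sub_add_inv_mul_pow_sub_H_le (hr0 : 0 < r) (hr1 : r < 1) :
    |∑ k ∈ Icc 1 (N - 1), (1 / ((N : ℝ) - k) + 1 / (r * k)) * r ^ k - (1 + r) / r * H (N - 1)|
      ≤ 2 * N / r := by
  have hterm : ∀ k ∈ Icc 1 (N - 1), 0 ≤ (1 / ((N : ℝ) - k) + 1 / (r * k)) * r ^ k ∧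
      (1 / ((N : ℝ) - k) + 1 / (r * k)) * r ^ k ≤ 2 / r := by
    intro k hk
    have hNk := one_le_cast_sub_of_mem_Icc hk
    have hk1 : (1 : ℝ) ≤ k := mod_cast (mem_Icc.1 hk).1
    refine ⟨by positivity, ?_⟩
    calc (1 / ((N : ℝ) - k) + 1 / (r * k)) * r ^ k ≤ (1 / r + 1 / r) * 1 := by
          gcongr
          · linarith
          · exact le_mul_of_one_le_right hr0.le hk1
          · exact pow_le_one₀ hr0.le hr1.le
      _ = 2 / r := by ring
  have hS : ∑ k ∈ Icc 1 (N - 1), (1 / ((N : ℝ) - k) + 1 / (r * k)) * r ^ k ≤ 2 * N / r := by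
    calc _ ≤ (Icc 1 (N - 1)).card • (2 / r) :=
          sum_le_card_nsmul _ _ _ fun k hk => (hterm k hk).2
      _ ≤ N • (2 / r) := nsmul_le_nsmul_left (by positivity) (by rw [Nat.card_Icc]; omega)
      _ = 2 * N / r := by rw [nsmul_eq_mul]; ring
  have hH : (1 + r) / r * H (N - 1) ≤ 2 * N / r := by
    calc (1 + r) / r * H (N - 1) ≤ 2 / r * N := by
          gcongr
          · exact H_nonneg _
          · linarith
          · exact (H_le_self _).trans (mod_cast Nat.sub_le N 1)
      _ = 2 * N / r := by ring
  have hS0 := sum_nonneg fun k hk => (hterm k hk).1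
  have hH0 : 0 ≤ (1 + r) / r * H (N - 1) := by have := H_nonneg (N - 1); positivity
  exact abs_sub_le_iff.2 ⟨by linarith, by linarith⟩

lemma mul_abs_remainder_le (hr0 : 0 < r) (hr1 : r < 1) (hN : 1 ≤ N) :
    N * |N * ∑ k ∈ Icc 1 (N - 1), (1 / ((N : ℝ) - k) + 1 / (r * k)) * r ^ k
        + log (1 - r) / r * N - r / (1 - r)|
      ≤ geomMoment r 1 + geomMoment r 2 + geomMoment r 1 / (1 - r)
        + geomMoment r 2 / (r * (1 - r)) := by
  rw [mul_sum_add_sub_eq hr0.ne' hr1.ne hN]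
  set P := ∑ k ∈ Icc 1 (N - 1), k * r ^ k / ((N : ℝ) - k)
  set T := ∑ k ∈ Icc 1 (N - 1), r ^ k / k + log (1 - r)
  have h1r : 0 < 1 - r := by linarith
  have hP0 : 0 ≤ N * P := mul_nonneg N.cast_nonneg <| sum_nonneg fun k hk => by
    have := one_le_cast_sub_of_mem_Icc hk
    exact div_nonneg (by positivity) (by linarith)
  have hP : N * P ≤ geomMoment r 1 + geomMoment r 2 := sum_mul_pow_div_sub_le hr0.le hr1
  have hx : N * (r ^ N / (1 - r)) ≤ geomMoment r 1 / (1 - r) := by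
    rw [← mul_div_assoc]
    gcongr
    simpa using pow_mul_pow_le_geomMoment hr0.le hr1 1 N
  have hT : |N * (N / r * T)| ≤ geomMoment r 2 / (r * (1 - r)) := by
    calc |N * (N / r * T)| = N ^ 2 / r * |T| := by
          rw [abs_mul, abs_mul, abs_div, abs_of_pos hr0, Nat.abs_cast]; ring
      _ ≤ N ^ 2 / r * (r ^ N / (1 - r)) := by
          gcongr; exact abs_sum_pow_div_add_log_le hr0.le hr1 hN
      _ = N ^ 2 * r ^ N / (r * (1 - r)) := by field_simp
      _ ≤ geomMoment r 2 / (r * (1 - r)) := by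
          gcongr; exact pow_mul_pow_le_geomMoment hr0.le hr1 2 N
  have hx0 : 0 ≤ N * (r ^ N / (1 - r)) := by positivity
  rw [← Nat.abs_cast N, ← abs_mul, Nat.abs_cast, mul_add, mul_sub]
  rw [abs_le] at hT ⊢
  constructor <;> linarith

lemma mul_abs_exponentially_small_le (hr0 : 0 < r) (hr1 : r < 1) (hN : 1 ≤ N) :
    N * |N * r ^ N / (1 - r ^ N)
        * (∑ k ∈ Icc 1 (N - 1), (1 / ((N : ℝ) - k) + 1 / (r * k)) * r ^ k
          - (1 + r) / r * H (N - 1))|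
      ≤ 2 * geomMoment r 3 / (r * (1 - r)) := by
  have hxr : r ^ N ≤ r := pow_le_of_le_one hr0.le hr1.le (by omega)
  have h1x : 0 < 1 - r ^ N := by linarith
  calc _ ≤ (N : ℝ) * (N * r ^ N / (1 - r) * (2 * N / r)) := by
        rw [abs_mul, abs_of_nonneg (by positivity)]
        gcongr
        exact abs_sum_inv_sub_add_inv_mul_pow_sub_H_le hr0 hr1
    _ = 2 * (N ^ 3 * r ^ N) / (r * (1 - r)) := by
        have : 1 - r ≠ 0 := by linarith
        field_simp
    _ ≤ 2 * geomMoment r 3 / (r * (1 - r)) := by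
        have : 0 < 1 - r := by linarith
        gcongr
        exact pow_mul_pow_le_geomMoment hr0.le hr1 3 N

end

theorem t1_asymptotic_r_lt_one (r : ℝ) (hr0 : 0 < r) (hr1 : r < 1) :
    ∃ C : ℝ, ∀ N : ℕ, 2 ≤ N →
      |((N : ℝ) * (1 + r) / (r * (1 - r ^ (-(N : ℤ))))) * H (N - 1)
          - ((N : ℝ) * r ^ (-(N : ℤ)) / (1 - r ^ (-(N : ℤ)))) *
              (∑ k ∈ Finset.Icc 1 (N - 1), (1 / ((N : ℝ) - k) + 1 / (r * k)) * r ^ k)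
          + (Real.log (1 - r) / r) * N - r / (1 - r)|
        ≤ C / N := by
  refine ⟨2 * geomMoment r 3 / (r * (1 - r)) + (geomMoment r 1 + geomMoment r 2
    + geomMoment r 1 / (1 - r) + geomMoment r 2 / (r * (1 - r))), fun N hN => ?_⟩
  have hN1 : 1 ≤ N := by omega
  have hx0 : r ^ N ≠ 0 := (pow_pos hr0 N).ne'
  have hx1 : r ^ N ≠ 1 := (pow_lt_one₀ hr0.le hr1 (by omega)).ne
  rw [zpow_neg, zpow_natCast, t1_decomposition hr0.ne' hx0 hx1,
    le_div_iff₀ (by positivity), mul_comm]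
  refine (mul_le_mul_of_nonneg_left (abs_add_le _ _) N.cast_nonneg).trans ?_
  rw [mul_add]
  exact add_le_add (mul_abs_exponentially_small_le hr0 hr1 hN1) (mul_abs_remainder_le hr0 hr1 hN1)
end
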